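/- If (G,p) is an infinitesimally rigid framework in R^3 at a generic configuration p, then G is rigid at every generic configuration (generic rigidity is a property of the graph: existence of one infinitesimally rigid realization implies rigidity at all generic realizations). -/

import Mathlib

open Finset

/-- The standard dot product on `ℝ³`. -/
def dot3 (a b : Fin 3 → ℝ) : ℝ := ∑ i, a i * b i

/-- `ν` is an infinitesimal motion of the framework `(G, p)` in `ℝ³`:
`(p x - p y) ⬝ (ν x - ν y) = 0` for every edge `{x,y}` of `G`. -/
def IsInfMotion {V : Type*} (G : SimpleGraph V) (p ν : V → Fin 3 → ℝ) : Prop :=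
  ∀ ⦃x y : V⦄, G.Adj x y → dot3 (p x - p y) (ν x - ν y) = 0

/-- `ν` is an infinitesimal rigid motion of the configuration `p`:
`(p x - p y) ⬝ (ν x - ν y) = 0` for every pair of vertices. -/
def IsInfRigidMotion {V : Type*} (p ν : V → Fin 3 → ℝ) : Prop :=
  ∀ x y : V, dot3 (p x - p y) (ν x - ν y) = 0

/-- The framework `(G, p)` is infinitesimally rigid in `ℝ³`. -/
def InfRigid {V : Type*} (G : SimpleGraph V) (p : V → Fin 3 → ℝ) : Prop :=
  ∀ ν, IsInfMotion G p ν → IsInfRigidMotion p ν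

/-- The row of the rigidity matrix corresponding to the edge `e`, viewed as the
linear functional `ν ↦ (p x - p y) ⬝ (ν x - ν y)` on the space of velocity assignments. -/
def rowFun {V : Type*} (p : V → Fin 3 → ℝ) (e : Sym2 V) : (V → Fin 3 → ℝ) → ℝ :=
  fun ν => Sym2.lift ⟨fun x y => dot3 (p x - p y) (ν x - ν y), by
    intro x y
    unfold dot3
    apply Finset.sum_congr rfl
    intro i _
    simp only [Pi.sub_apply]
    ring⟩ e

/-- The rows of the rigidity matrix of `(G, p)` (one per edge) are linearly independent. -/
def RigidityIndependent {V : Type*} (G : SimpleGraph V) (p : V → Fin 3 → ℝ) : Prop :=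
  LinearIndependent ℝ (fun e : G.edgeSet => rowFun p (e : Sym2 V))

/-- A configuration is generic if its `3|V|` coordinates are algebraically independent
over the rationals. -/
def Generic {V : Type*} (p : V → Fin 3 → ℝ) : Prop :=
  AlgebraicIndependent ℚ (fun iv : V × Fin 3 => p iv.1 iv.2)

/-!
Infinitesimal rigidity of `(G, p)` says that the rigidity matrix of the edges of `G` has the same
rank as the rigidity matrix of all pairs of vertices. A generic `p` is the image of the
configuration of indeterminates of the rational function field `ℚ(X_{v,i})` under a field
embedding into `ℝ`, and the rank of a matrix does not change along a field embedding. So both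
ranks at `p` equal the corresponding ranks over `ℚ(X_{v,i})`, which do not depend on `p`.
-/

open Module Submodule Matrix

theorem finrank_span_range_algebraMap_comp {K L ι n : Type*} [Field K] [Field L] [Algebra K L]
    [Finite n] (v : ι → n → K) :
    finrank L (span L (Set.range fun i => algebraMap K L ∘ v i)) =
      finrank K (span K (Set.range v)) := by
  obtain ⟨κ, a, -, hspan, hli⟩ := exists_linearIndependent' K v
  have : Fintype κ := have := hli.finite; .ofFinite κ
  have hliL : LinearIndependent L fun k => algebraMap K L ∘ v (a k) :=
    linearIndependent_algebraMap_comp_iff.mpr hli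
  let φ : (n → K) →ₗ[K] (n → L) := (Algebra.linearMap K L).compLeft n
  have hspanL : span L (Set.range fun i => algebraMap K L ∘ v i) =
      span L (Set.range fun k => algebraMap K L ∘ v (a k)) := by
    refine le_antisymm (span_le.mpr ?_)
      (span_mono (Set.range_comp_subset_range a fun i => algebraMap K L ∘ v i))
    rintro _ ⟨i, rfl⟩
    have hvi : v i ∈ span K (Set.range (v ∘ a)) := hspan ▸ subset_span ⟨i, rfl⟩
    have hφvi : φ (v i) ∈ span K (φ '' Set.range (v ∘ a)) := by
      rw [← map_span]
      exact mem_map_of_mem hvi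
    rw [← Set.range_comp] at hφvi
    exact span_le_restrictScalars K L _ hφvi
  rw [← hspan, hspanL, finrank_span_eq_card hliL, finrank_span_eq_card hli]

theorem Matrix.rank_map_ringHom {K L m n : Type*} [Field K] [Field L] [Finite m] [Fintype n]
    (f : K →+* L) (A : Matrix m n K) : (A.map f).rank = A.rank := by
  let := f.toAlgebra
  rw [rank_eq_finrank_span_row, rank_eq_finrank_span_row]
  exact finrank_span_range_algebraMap_comp A

theorem Matrix.ker_mulVecLin_le_iff_rank_eq {K m m' n : Type*} [Field K] [Fintype n]
    {A : Matrix m n K} {B : Matrix m' n K}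
    (hBA : LinearMap.ker B.mulVecLin ≤ LinearMap.ker A.mulVecLin) :
    LinearMap.ker A.mulVecLin ≤ LinearMap.ker B.mulVecLin ↔ A.rank = B.rank := by
  have hA := LinearMap.finrank_range_add_finrank_ker A.mulVecLin
  have hB := LinearMap.finrank_range_add_finrank_ker B.mulVecLin
  rw [← Matrix.rank] at hA hB
  constructor
  · intro hAB
    rw [le_antisymm hAB hBA] at hA
    omega
  · intro hrank
    exact (eq_of_le_of_finrank_eq hBA (by omega)).ge

noncomputable def genericConfig (V : Type*) :
    V → Fin 3 → FractionRing (MvPolynomial (V × Fin 3) ℚ) :=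
  fun v i => algebraMap (MvPolynomial (V × Fin 3) ℚ) _ (MvPolynomial.X (v, i))

theorem Generic.exists_ringHom_comp_genericConfig {V : Type*} {p : V → Fin 3 → ℝ}
    (hp : Generic p) :
    ∃ φ : FractionRing (MvPolynomial (V × Fin 3) ℚ) →+* ℝ,
      (fun v i => φ (genericConfig V v i)) = p :=
  ⟨IsFractionRing.lift hp, by
    funext v i
    simp [genericConfig]⟩

section Rigidity

variable {V : Type*} [DecidableEq V]

-- Rows are indexed by ordered pairs, so an edge gives two equal rows; only kernels and ranks
-- matter.
def rigidityMatrix {R : Type*} [CommRing R] (p : V → Fin 3 → R) (S : Set (V × V)) :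
    Matrix S (V × Fin 3) R :=
  fun e vi => (p e.1.1 vi.2 - p e.1.2 vi.2) *
    ((if vi.1 = e.1.1 then 1 else 0) - (if vi.1 = e.1.2 then 1 else 0))

theorem rigidityMatrix_map {R R' : Type*} [CommRing R] [CommRing R'] (f : R →+* R')
    (p : V → Fin 3 → R) (S : Set (V × V)) :
    (rigidityMatrix p S).map f = rigidityMatrix (fun v i => f (p v i)) S := by
  ext e vi
  simp [rigidityMatrix, apply_ite f]

variable [Fintype V]

theorem rigidityMatrix_mulVec (p ν : V → Fin 3 → ℝ) (S : Set (V × V)) (e : S) :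
    (rigidityMatrix p S *ᵥ fun vi => ν vi.1 vi.2) e =
      dot3 (p e.1.1 - p e.1.2) (ν e.1.1 - ν e.1.2) := by
  simp only [mulVec, dotProduct, rigidityMatrix, Fintype.sum_prod_type_right, mul_sub, sub_mul,
    mul_ite, mul_one, mul_zero, ite_mul, zero_mul, Finset.sum_sub_distrib, Finset.sum_ite_eq',
    Finset.mem_univ, if_true, dot3, Pi.sub_apply]

theorem mem_ker_rigidityMatrix_iff (p ν : V → Fin 3 → ℝ) (S : Set (V × V)) :
    (fun vi => ν vi.1 vi.2) ∈ LinearMap.ker (rigidityMatrix p S).mulVecLin ↔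
      ∀ e ∈ S, dot3 (p e.1 - p e.2) (ν e.1 - ν e.2) = 0 := by
  simp only [LinearMap.mem_ker, mulVecLin_apply, funext_iff, rigidityMatrix_mulVec,
    Pi.zero_apply, Subtype.forall]

theorem ker_rigidityMatrix_le {R : Type*} [CommRing R] (p : V → Fin 3 → R) {S T : Set (V × V)}
    (hST : S ⊆ T) :
    LinearMap.ker (rigidityMatrix p T).mulVecLin ≤
      LinearMap.ker (rigidityMatrix p S).mulVecLin := by
  intro w hw
  ext e
  exact congrFun (hw : rigidityMatrix p T *ᵥ w = 0) ⟨e.1, hST e.2⟩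

theorem infRigid_iff_ker_le (G : SimpleGraph V) (p : V → Fin 3 → ℝ) :
    InfRigid G p ↔ LinearMap.ker (rigidityMatrix p {e | G.Adj e.1 e.2}).mulVecLin ≤
      LinearMap.ker (rigidityMatrix p Set.univ).mulVecLin := by
  have hmotion (ν : V → Fin 3 → ℝ) := mem_ker_rigidityMatrix_iff p ν {e | G.Adj e.1 e.2}
  have hrigid (ν : V → Fin 3 → ℝ) := mem_ker_rigidityMatrix_iff p ν Set.univ
  simp only [Set.mem_ofPred_eq, Set.mem_univ, true_implies, Prod.forall] at hmotion hrigid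
  refine ⟨fun h w hw => ?_, fun h ν hν => (hrigid ν).mp (h ((hmotion ν).mpr hν))⟩
  exact (hrigid fun v i => w (v, i)).mpr (h _ ((hmotion fun v i => w (v, i)).mp hw))

theorem infRigid_iff_rank_eq (G : SimpleGraph V) (p : V → Fin 3 → ℝ) :
    InfRigid G p ↔
      (rigidityMatrix p {e | G.Adj e.1 e.2}).rank = (rigidityMatrix p Set.univ).rank := by
  rw [infRigid_iff_ker_le]
  exact ker_mulVecLin_le_iff_rank_eq (ker_rigidityMatrix_le p (Set.subset_univ _))

theorem rank_rigidityMatrix_of_generic {p : V → Fin 3 → ℝ} (hp : Generic p)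
    (S : Set (V × V)) :
    (rigidityMatrix p S).rank = (rigidityMatrix (genericConfig V) S).rank := by
  obtain ⟨φ, rfl⟩ := hp.exists_ringHom_comp_genericConfig
  rw [← rigidityMatrix_map, rank_map_ringHom]

theorem infRigid_iff_of_generic (G : SimpleGraph V) {p q : V → Fin 3 → ℝ} (hp : Generic p)
    (hq : Generic q) : InfRigid G p ↔ InfRigid G q := by
  simp only [infRigid_iff_rank_eq, rank_rigidityMatrix_of_generic hp,
    rank_rigidityMatrix_of_generic hq]

end Rigidity

/-- Generic rigidity is a property of the graph: if `(G,p)` is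
infinitesimally rigid at one generic configuration `p`, then `(G,q)` is infinitesimally
rigid at every generic configuration `q`. -/
theorem generic_rigidity_is_graph_property {V : Type*} [Fintype V] [DecidableEq V]
    (G : SimpleGraph V) (p : V → Fin 3 → ℝ)
    (hp : Generic p) (hrigid : InfRigid G p) :
    ∀ q : V → Fin 3 → ℝ, Generic q → InfRigid G q :=
  fun _ hq => (infRigid_iff_of_generic G hp hq).mp hrigid
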